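/- arXiv:2504.19553 — 3 statements merged into one kernel-verified Lean document; each statement's English description precedes it below -/
import Mathlib

section
/- Let G = (V, E) be a locally finite simple graph with edge-isoperimetric constant IC(G), meaning |∂γ| ≥ IC(G)·|γ| for every finite nonempty γ ⊆ V. Let σ⁰ be a configuration such that every vertex is incident to at most δ_max broken edges of σ⁰ (edges {v,w} with σ⁰ v ≠ σ⁰ w). Then for every finite nonempty γ ⊆ V, the configuration σ obtained by flipping σ⁰ on γ satisfies H(σ) - H(σ⁰) ≥ (IC(G) - 2·δ_max)·|γ|, where H(σ) - H(σ⁰) is the sum over edges {v,w} in ∂γ of (1[σ v ≠ σ w] - 1[σ⁰ v ≠ σ⁰ w]). -/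
open Finset

/-- Excess energy of `σ` w.r.t. `σ0` across the edge boundary of `γ`. -/
def excessEnergy {V : Type*} [DecidableEq V] (G : SimpleGraph V) [DecidableRel G.Adj]
    [G.LocallyFinite] (σ0 σ : V → Bool) (γ : Finset V) : ℤ :=
  ∑ v ∈ γ, ∑ w ∈ (G.neighborFinset v).filter (fun w => w ∉ γ),
    ((if σ v ≠ σ w then (1 : ℤ) else 0) - (if σ0 v ≠ σ0 w then (1 : ℤ) else 0))

/-- Excess energy lemma: if `|∂γ| ≥ IC·|γ|` for all finite nonempty `γ` and
every vertex is incident to at most `δmax` broken edges of `σ0`, then flipping `σ0` on any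
finite nonempty `γ` has excess energy at least `(IC - 2·δmax)·|γ|`. -/
theorem stmt2 {V : Type*} [DecidableEq V] (G : SimpleGraph V) [DecidableRel G.Adj]
    [G.LocallyFinite] (IC : ℝ)
    (hIC : ∀ γ : Finset V, γ.Nonempty →
      IC * γ.card ≤ ((∑ v ∈ γ, ((G.neighborFinset v).filter (fun w => w ∉ γ)).card : ℕ) : ℝ))
    (δmax : ℕ) (σ0 : V → Bool)
    (hbr : ∀ v : V, ((G.neighborFinset v).filter (fun w => σ0 v ≠ σ0 w)).card ≤ δmax)
    (γ : Finset V) (hγ : γ.Nonempty) (σ : V → Bool)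
    (hσ : ∀ u, σ u = if u ∈ γ then !σ0 u else σ0 u) :
    (IC - 2 * δmax) * γ.card ≤ (excessEnergy G σ0 σ γ : ℝ) := by
  have hterm : ∀ v ∈ γ, ∀ w ∈ (G.neighborFinset v).filter (fun w => w ∉ γ),
      ((if σ v ≠ σ w then (1:ℤ) else 0) - (if σ0 v ≠ σ0 w then (1:ℤ) else 0))
        = 1 - 2 * (if σ0 v ≠ σ0 w then (1:ℤ) else 0) := by
    intro v hv w hw
    simp only [mem_filter] at hw
    rw [hσ v, hσ w, if_pos hv, if_neg hw.2]
    cases σ0 v <;> cases σ0 w <;> simp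
  have hinner : ∀ v ∈ γ,
      (((G.neighborFinset v).filter (fun w => w ∉ γ)).card : ℤ) - 2 * δmax
        ≤ ∑ w ∈ (G.neighborFinset v).filter (fun w => w ∉ γ),
          ((if σ v ≠ σ w then (1:ℤ) else 0) - (if σ0 v ≠ σ0 w then (1:ℤ) else 0)) := by
    intro v hv
    rw [Finset.sum_congr rfl (hterm v hv), Finset.sum_sub_distrib, Finset.sum_const,
      ← Finset.mul_sum]
    have hsub : ((G.neighborFinset v).filter (fun w => w ∉ γ)).filter (fun w => σ0 v ≠ σ0 w)
        ⊆ (G.neighborFinset v).filter (fun w => σ0 v ≠ σ0 w) := by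
      intro w hw
      simp only [mem_filter] at hw ⊢
      exact ⟨hw.1.1, hw.2⟩
    have hs : ∑ w ∈ (G.neighborFinset v).filter (fun w => w ∉ γ),
        (if σ0 v ≠ σ0 w then (1:ℤ) else 0) ≤ (δmax : ℤ) := by
      rw [Finset.sum_boole]
      exact_mod_cast le_trans (Finset.card_le_card hsub) (hbr v)
    simp only [nsmul_eq_mul, mul_one]
    linarith
  have hZ : ((∑ v ∈ γ, ((G.neighborFinset v).filter (fun w => w ∉ γ)).card : ℕ) : ℤ)
      - 2 * δmax * γ.card ≤ excessEnergy G σ0 σ γ := by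
    unfold excessEnergy
    calc ((∑ v ∈ γ, ((G.neighborFinset v).filter (fun w => w ∉ γ)).card : ℕ) : ℤ)
          - 2 * δmax * γ.card
        = ∑ v ∈ γ, ((((G.neighborFinset v).filter (fun w => w ∉ γ)).card : ℤ) - 2 * δmax) := by
          rw [Finset.sum_sub_distrib, Finset.sum_const]
          push_cast
          ring
      _ ≤ _ := Finset.sum_le_sum hinner
  have hR : (((∑ v ∈ γ, ((G.neighborFinset v).filter (fun w => w ∉ γ)).card : ℕ) : ℝ))
      - 2 * δmax * γ.card ≤ (excessEnergy G σ0 σ γ : ℝ) := by exact_mod_cast hZ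
  have := hIC γ hγ
  nlinarith [this]
end

section
/- Let G be a locally finite graph and suppose δ_max < (1/2)·IC(G), where IC(G) > 0 is the edge-isoperimetric constant. Then for every configuration σ⁰ in which each vertex is incident to at most δ_max broken edges, and every finite nonempty vertex set γ, flipping σ⁰ on γ strictly increases the energy: H(σ) - H(σ⁰) ≥ (IC(G) - 2δ_max)·|γ| > 0. In particular σ⁰ is a local ground state: no finite modification of σ⁰ has lower or equal energy difference than (IC(G) - 2δ_max)·|γ|. -/
open Finset

/-- if `δmax < IC/2` with `IC > 0` the isoperimetric constant, then every
configuration with at most `δmax` broken edges per vertex is a local ground state: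
flipping it on any finite nonempty `γ` has excess energy `≥ (IC - 2·δmax)·|γ| > 0`. -/
theorem stmt4 {V : Type*} [DecidableEq V] (G : SimpleGraph V) [DecidableRel G.Adj]
    [G.LocallyFinite] (IC : ℝ) (hICpos : 0 < IC)
    (hIC : ∀ γ : Finset V, γ.Nonempty →
      IC * γ.card ≤ ((∑ v ∈ γ, ((G.neighborFinset v).filter (fun w => w ∉ γ)).card : ℕ) : ℝ))
    (δmax : ℕ) (hδ : (δmax : ℝ) < IC / 2) :
    ∀ σ0 : V → Bool,
      (∀ v : V, ((G.neighborFinset v).filter (fun w => σ0 v ≠ σ0 w)).card ≤ δmax) →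
      ∀ γ : Finset V, γ.Nonempty → ∀ σ : V → Bool,
        (∀ u, σ u = if u ∈ γ then !σ0 u else σ0 u) →
        (IC - 2 * δmax) * γ.card ≤ (excessEnergy G σ0 σ γ : ℝ) ∧
        0 < (IC - 2 * δmax) * γ.card := by
  intro σ0 hσ0 γ hγ σ hσ
  have hcard : 0 < (γ.card : ℝ) := by exact_mod_cast Finset.card_pos.mpr hγ
  have hpos : 0 < (IC - 2 * δmax) * γ.card := mul_pos (by linarith) hcard
  refine ⟨?_, hpos⟩
  have key : ((∑ v ∈ γ, ((G.neighborFinset v).filter (fun w => w ∉ γ)).card : ℕ) : ℤ)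
      - 2 * δmax * γ.card ≤ excessEnergy G σ0 σ γ := by
    unfold excessEnergy
    push_cast
    rw [show (2 * (δmax:ℤ) * γ.card) = ∑ _v ∈ γ, 2*(δmax:ℤ) by
      rw [Finset.sum_const]; push_cast; ring, ← Finset.sum_sub_distrib]
    apply Finset.sum_le_sum
    intro v hv
    have hterm : ∀ w ∈ (G.neighborFinset v).filter (fun w => w ∉ γ),
        ((if σ v ≠ σ w then (1:ℤ) else 0) - (if σ0 v ≠ σ0 w then 1 else 0)) =
        (1 : ℤ) - 2 * (if σ0 v ≠ σ0 w then 1 else 0) := by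
      intro w hw
      have hw' : w ∉ γ := (mem_filter.mp hw).2
      have h1 : σ v = !σ0 v := by rw [hσ v, if_pos hv]
      have h2 : σ w = σ0 w := by rw [hσ w, if_neg hw']
      rw [h1, h2]
      cases σ0 v <;> cases σ0 w <;> simp
    rw [Finset.sum_congr rfl hterm, Finset.sum_sub_distrib, Finset.sum_const,
      ← Finset.mul_sum]
    have hb : (((G.neighborFinset v).filter (fun w => w ∉ γ)).filter
        (fun w => σ0 v ≠ σ0 w)).card ≤ δmax :=
      le_trans (Finset.card_le_card (Finset.filter_subset_filter _
        (Finset.filter_subset _ _))) (hσ0 v)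
    have hsum : ∑ w ∈ (G.neighborFinset v).filter (fun w => w ∉ γ),
        (if σ0 v ≠ σ0 w then (1:ℤ) else 0) =
        (((G.neighborFinset v).filter (fun w => w ∉ γ)).filter
          (fun w => σ0 v ≠ σ0 w)).card := by
      rw [Finset.sum_ite, Finset.sum_const_zero, Finset.sum_const]
      simp
    rw [hsum]
    have : ((((G.neighborFinset v).filter (fun w => w ∉ γ)).filter
        (fun w => σ0 v ≠ σ0 w)).card : ℤ) ≤ (δmax : ℤ) := by exact_mod_cast hb
    simp only [nsmul_eq_mul, mul_one]
    linarith
  have hIC' := hIC γ hγ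
  have key' : ((∑ v ∈ γ, ((G.neighborFinset v).filter (fun w => w ∉ γ)).card : ℕ) : ℝ)
      - 2 * δmax * γ.card ≤ (excessEnergy G σ0 σ γ : ℝ) := by exact_mod_cast key
  nlinarith
end

section
/- Let G = (V,E) be locally finite with isoperimetric constant IC(G) > 2, and let F ⊆ E be a set of edges with each vertex incident to at most one edge of F, with V = A ⊔ B such that all A–B edges lie in F. Define ω = +1 on A, -1 on B. Then for every finite nonempty γ ⊆ V, flipping ω on γ has excess energy at least (IC(G) - 2)·|γ| > 0. -/
open Finset

/-- if `IC(G) > 2` and `ω` is the Dobrushin-type configuration determined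
by a partition `V = A ⊔ Aᶜ` whose crossing edges lie in a matching-like edge set `F`
(at most one `F`-edge per vertex), then flipping `ω` on any finite nonempty `γ` has
excess energy at least `(IC - 2)·|γ| > 0`. -/
theorem stmt16 {V : Type*} [DecidableEq V] (G : SimpleGraph V) [DecidableRel G.Adj]
    [G.LocallyFinite] (IC : ℝ) (hIC2 : 2 < IC)
    (hIC : ∀ γ : Finset V, γ.Nonempty →
      IC * γ.card ≤ ((∑ v ∈ γ, ((G.neighborFinset v).filter (fun w => w ∉ γ)).card : ℕ) : ℝ))
    (F : V → V → Prop) [DecidableRel F]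
    (hFsub : ∀ v w, F v w → G.Adj v w)
    (hFsymm : ∀ v w, F v w → F w v)
    (hF1 : ∀ v : V, ((G.neighborFinset v).filter (fun w => F v w)).card ≤ 1)
    (A : Set V) [DecidablePred (· ∈ A)]
    (hcross : ∀ v w, G.Adj v w → v ∈ A → w ∉ A → F v w)
    (ω : V → Bool) (hω : ∀ v, ω v = if v ∈ A then true else false) :
    ∀ γ : Finset V, γ.Nonempty → ∀ σ : V → Bool,
      (∀ u, σ u = if u ∈ γ then !ω u else ω u) →
      (IC - 2) * γ.card ≤ (excessEnergy G ω σ γ : ℝ) ∧ 0 < (IC - 2) * γ.card := by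
  intro γ hγ σ hσ
  have hγ1 : (0:ℝ) < γ.card := by exact_mod_cast hγ.card_pos
  refine ⟨?_, mul_pos (by linarith) hγ1⟩
  -- step: per-vertex lower bound on the inner sum
  have step : ∀ v ∈ γ,
      (((G.neighborFinset v).filter (fun w => w ∉ γ)).card : ℤ) - 2
        ≤ ∑ w ∈ (G.neighborFinset v).filter (fun w => w ∉ γ),
            ((if σ v ≠ σ w then (1 : ℤ) else 0) - (if ω v ≠ ω w then (1 : ℤ) else 0)) := by
    intro v hv
    have hrw : ∀ w ∈ (G.neighborFinset v).filter (fun w => w ∉ γ),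
        ((if σ v ≠ σ w then (1 : ℤ) else 0) - (if ω v ≠ ω w then (1 : ℤ) else 0))
          = 1 - 2 * (if ω v ≠ ω w then (1:ℤ) else 0) := by
      intro w hw
      simp only [mem_filter] at hw
      rw [hσ v, hσ w, if_pos hv, if_neg hw.2]
      cases ω v <;> cases ω w <;> simp
    rw [Finset.sum_congr rfl hrw, Finset.sum_sub_distrib, Finset.sum_const,
      ← Finset.mul_sum]
    have hsub : ((G.neighborFinset v).filter (fun w => w ∉ γ)).filter (fun w => ω v ≠ ω w)
        ⊆ (G.neighborFinset v).filter (fun w => F v w) := by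
      intro w hw
      simp only [mem_filter, SimpleGraph.mem_neighborFinset] at hw ⊢
      obtain ⟨⟨hadj, -⟩, hne⟩ := hw
      refine ⟨hadj, ?_⟩
      rw [hω v, hω w] at hne
      by_cases hvA : v ∈ A <;> by_cases hwA : w ∈ A <;> simp [hvA, hwA] at hne
      · exact hcross v w hadj hvA hwA
      · exact hFsymm w v (hcross w v hadj.symm hwA hvA)
    have hk : ∑ w ∈ (G.neighborFinset v).filter (fun w => w ∉ γ),
        (if ω v ≠ ω w then (1:ℤ) else 0) ≤ 1 := by
      rw [Finset.sum_boole]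
      have := (Finset.card_le_card hsub).trans (hF1 v)
      exact_mod_cast this
    have hnn : (0:ℤ) ≤ ∑ w ∈ (G.neighborFinset v).filter (fun w => w ∉ γ),
        (if ω v ≠ ω w then (1:ℤ) else 0) :=
      Finset.sum_nonneg fun w _ => by positivity
    simp only [nsmul_eq_mul, mul_one]
    linarith
  have hZ : (∑ v ∈ γ, (((G.neighborFinset v).filter (fun w => w ∉ γ)).card : ℤ))
      - 2 * γ.card ≤ excessEnergy G ω σ γ := by
    have := Finset.sum_le_sum step
    rw [Finset.sum_sub_distrib, Finset.sum_const] at this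
    unfold excessEnergy
    simpa [mul_comm] using this
  have hB := hIC γ hγ
  have hZR : ((∑ v ∈ γ, (((G.neighborFinset v).filter (fun w => w ∉ γ)).card : ℤ)) : ℝ)
      - 2 * γ.card ≤ (excessEnergy G ω σ γ : ℝ) := by exact_mod_cast hZ
  push_cast at hZR hB
  nlinarith
end
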